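/- Soundness of constraint reduction C5: if (Γ ∪ {{M}N})θ ⊢ Nθ is derivable using only the rules id, p_R, e_R, and (Γ ∪ {M,N})θ ⊢ Uθ is derivable in the full Dolev-Yao sequent calculus, then (Γ ∪ {{M}N})θ ⊢ Uθ is derivable in the full Dolev-Yao sequent calculus. -/
import Mathlib


/-- Dolev-Yao messages with variables. -/
inductive MsgV : Type
  | name : ℕ → MsgV
  | var  : ℕ → MsgV
  | pair : MsgV → MsgV → MsgV
  | enc  : MsgV → MsgV → MsgV
  deriving DecidableEq

open MsgV

/-- Homomorphic extension of a substitution to messages. -/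
def substT (θ : ℕ → MsgV) : MsgV → MsgV
  | name a => name a
  | var x => θ x
  | pair m n => pair (substT θ m) (substT θ n)
  | enc m k => enc (substT θ m) (substT θ k)

/-- Variables occurring in a message. -/
def varsT : MsgV → Finset ℕ
  | name _ => ∅
  | var x => {x}
  | pair m n => varsT m ∪ varsT n
  | enc m k => varsT m ∪ varsT k

/-- Ground (variable-free) messages. -/
def groundT (m : MsgV) : Prop := varsT m = ∅

/-- Ground substitutions. -/
def groundSub (θ : ℕ → MsgV) : Prop := ∀ x, groundT (θ x)

/-- The Dolev-Yao sequent calculus. -/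
inductive SC : Set MsgV → MsgV → Prop
  | id {Γ M} : M ∈ Γ → SC Γ M
  | pR {Γ M N} : SC Γ M → SC Γ N → SC Γ (pair M N)
  | eR {Γ M K} : SC Γ M → SC Γ K → SC Γ (enc M K)
  | pL {Γ M N T} : pair M N ∈ Γ →
      SC (insert M (insert N Γ)) T → SC Γ T
  | eL {Γ M K T} : enc M K ∈ Γ → SC Γ K →
      SC (insert M (insert K Γ)) T → SC Γ T

/-- Right-deducibility: derivability using only id, p_R, e_R. -/
inductive SCR : Set MsgV → MsgV → Prop
  | id {Γ M} : M ∈ Γ → SCR Γ M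
  | pR {Γ M N} : SCR Γ M → SCR Γ N → SCR Γ (pair M N)
  | eR {Γ M K} : SCR Γ M → SCR Γ K → SCR Γ (enc M K)


lemma SCR_to_SC {Γ : Set MsgV} {T : MsgV} (h : SCR Γ T) : SC Γ T := by
  induction h with
  | id h => exact SC.id h
  | pR _ _ ih1 ih2 => exact SC.pR ih1 ih2
  | eR _ _ ih1 ih2 => exact SC.eR ih1 ih2

lemma SC_mono {Γ Δ : Set MsgV} {T : MsgV} (h : SC Γ T) (hs : Γ ⊆ Δ) : SC Δ T := by
  induction h generalizing Δ with
  | id h => exact SC.id (hs h)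
  | pR _ _ ih1 ih2 => exact SC.pR (ih1 hs) (ih2 hs)
  | eR _ _ ih1 ih2 => exact SC.eR (ih1 hs) (ih2 hs)
  | pL hmem _ ih =>
      exact SC.pL (hs hmem) (ih (Set.insert_subset_insert (Set.insert_subset_insert hs)))
  | eL hmem _ _ ihk ih =>
      exact SC.eL (hs hmem) (ihk hs) (ih (Set.insert_subset_insert (Set.insert_subset_insert hs)))

/-- Soundness of constraint reduction C5. -/
theorem c5_sound (Γ : Set MsgV) (M N U : MsgV) (θ : ℕ → MsgV)
    (hg : groundSub θ)
    (hkey : SCR ((substT θ) '' (Γ ∪ {enc M N})) (substT θ N))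
    (h : SC ((substT θ) '' (Γ ∪ {M, N})) (substT θ U)) :
    SC ((substT θ) '' (Γ ∪ {enc M N})) (substT θ U) := by
  apply SC.eL (M := substT θ M) (K := substT θ N)
  · exact ⟨enc M N, Or.inr rfl, rfl⟩
  · exact SCR_to_SC hkey
  · apply SC_mono h
    rintro x ⟨y, hy, rfl⟩
    rcases hy with hy | hy | hy
    · exact Or.inr (Or.inr ⟨y, Or.inl hy, rfl⟩)
    · subst hy; exact Or.inl rfl
    · simp only [Set.mem_singleton_iff] at hy; subst hy; exact Or.inr (Or.inl rfl)
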